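/- For every λ ∈ [0,1], the infimum of the operator norm (largest eigenvalue) of the 2×2 positive semidefinite matrix Tr_B Y, taken over all 4×4 Hermitian matrices Y such that Y is positive semidefinite, the partial transpose Y^PT is positive semidefinite, and Y − π_λ is positive semidefinite, equals 1 − λ/2. -/

import Mathlib

open scoped Kronecker ComplexOrder
open Matrix

noncomputable section

/-- Partial trace over the second tensor factor. -/
def ptraceB {m k : Type*} [Fintype k] (M : Matrix (m × k) (m × k) ℂ) : Matrix m m ℂ :=
  Matrix.of fun i j => ∑ b, M (i, b) (j, b)

/-- Partial transpose on the second tensor factor. -/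
def ptransposeB {m k : Type*} (M : Matrix (m × k) (m × k) ℂ) : Matrix (m × k) (m × k) ℂ :=
  Matrix.of fun p q => M (p.1, q.2) (q.1, p.2)

/-- Encoding of a two-qubit index as an index in `Fin 4` (basis order |00⟩,|01⟩,|10⟩,|11⟩). -/
def idx4 (p : Fin 2 × Fin 2) : Fin 4 :=
  ⟨2 * p.1.val + p.2.val, by have h1 := p.1.isLt; have h2 := p.2.isLt; omega⟩

/-- Choi state of the qubit amplitude damping channel with parameter `l`. -/
def adChoi (l : ℝ) : Matrix (Fin 2 × Fin 2) (Fin 2 × Fin 2) ℂ :=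
  Matrix.of fun p q =>
    (!![(1:ℂ)/2, 0, 0, ((Real.sqrt (1 - l) : ℝ) : ℂ)/2;
        0, 0, 0, 0;
        0, 0, ((l : ℝ) : ℂ)/2, 0;
        ((Real.sqrt (1 - l) : ℝ) : ℂ)/2, 0, 0, ((1 - l : ℝ) : ℂ)/2]) (idx4 p) (idx4 q)

/-- Largest eigenvalue (operator norm) of a Hermitian matrix, as the supremum of the
Rayleigh quotient over unit vectors. -/
def maxEig {n : Type*} [Fintype n] (M : Matrix n n ℂ) : ℝ :=
  sSup {r : ℝ | ∃ v : n → ℂ, (∑ i, Complex.normSq (v i)) = 1 ∧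
    r = (dotProduct (star v) (M.mulVec v)).re}

/-! The value is that of a semidefinite program, and both bounds come from explicit certificates;
a two-qubit vector `∑ A i j |ij⟩` is written `Function.uncurry A`.

For the upper bound, `Y = π_λ + (1 - λ)/2 · |Ψ⁺⟩⟨Ψ⁺|` with `Ψ⁺ = |01⟩ + |10⟩` is feasible: `Y`,
`Y - π_λ` and `Y^Γ` are nonnegative combinations of rank-one projectors, and
`Tr_B Y = (1 - λ/2) I`.

For the lower bound, with `z = |00⟩ + √(1 - λ)|11⟩` and `w = |01⟩ - √(1 - λ)|10⟩`, every `Y`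
satisfies `⟨0|Tr_B Y|0⟩ + (1 - λ)⟨1|Tr_B Y|1⟩ = ⟨z|Y - π_λ|z⟩ + ⟨w|Y^Γ|w⟩ + (2 - λ)²/2`.
For feasible `Y` the left side is therefore at least `(2 - λ)²/2`, and it is at most
`(2 - λ) ‖Tr_B Y‖`. -/

section MaxEig

variable {n : Type*} [Fintype n]

lemma bddAbove_rayleigh (M : Matrix n n ℂ) :
    BddAbove {r : ℝ | ∃ v : n → ℂ, (∑ i, Complex.normSq (v i)) = 1 ∧
      r = (star v ⬝ᵥ M *ᵥ v).re} := by
  refine ⟨∑ i, ∑ j, ‖M i j‖, ?_⟩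
  rintro r ⟨v, hv, rfl⟩
  have hv_le : ∀ i, ‖v i‖ ≤ 1 := fun i => by
    have : Complex.normSq (v i) ≤ 1 :=
      hv ▸ Finset.single_le_sum (fun j _ => Complex.normSq_nonneg (v j)) (Finset.mem_univ i)
    rw [Complex.normSq_eq_norm_sq] at this
    nlinarith [norm_nonneg (v i)]
  calc (star v ⬝ᵥ M *ᵥ v).re ≤ ‖star v ⬝ᵥ M *ᵥ v‖ := Complex.re_le_norm _
    _ = ‖∑ i, ∑ j, star (v i) * M i j * v j‖ := by
        simp only [dotProduct, mulVec, Finset.mul_sum, mul_assoc, Pi.star_apply]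
    _ ≤ ∑ i, ∑ j, ‖star (v i) * M i j * v j‖ :=
        (norm_sum_le _ _).trans (Finset.sum_le_sum fun i _ => norm_sum_le _ _)
    _ ≤ ∑ i, ∑ j, ‖M i j‖ := by
        gcongr with i _ j _
        rw [norm_mul, norm_mul, norm_star]
        calc ‖v i‖ * ‖M i j‖ * ‖v j‖ ≤ 1 * ‖M i j‖ * 1 := by gcongr <;> exact hv_le _
          _ = ‖M i j‖ := by ring

lemma re_apply_le_maxEig [DecidableEq n] (M : Matrix n n ℂ) (i : n) :
    (M i i).re ≤ maxEig M :=
  le_csSup (bddAbove_rayleigh M) ⟨Pi.single i 1, by simp [Pi.single_apply], by simp⟩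

lemma maxEig_smul_one [Nonempty n] [DecidableEq n] (c : ℝ) :
    maxEig (c • (1 : Matrix n n ℂ)) = c := by
  have rayleigh : ∀ v : n → ℂ, (∑ i, Complex.normSq (v i)) = 1 →
      (star v ⬝ᵥ (c • (1 : Matrix n n ℂ)) *ᵥ v).re = c := fun v hv => by
    have hnorm : (star v ⬝ᵥ v).re = 1 := by
      simpa [dotProduct, Complex.normSq_apply, Complex.mul_re, mul_comm] using hv
    rw [smul_mulVec, one_mulVec, dotProduct_smul, Complex.real_smul, Complex.re_ofReal_mul,
      hnorm, mul_one]
  have hv : (∑ i, Complex.normSq ((Pi.single (Classical.arbitrary n) 1 : n → ℂ) i)) = 1 := by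
    simp [Pi.single_apply]
  have rayleigh_set : {r : ℝ | ∃ v : n → ℂ, (∑ i, Complex.normSq (v i)) = 1 ∧
      r = (star v ⬝ᵥ (c • (1 : Matrix n n ℂ)) *ᵥ v).re} = {c} := by
    ext r
    simp only [Set.mem_ofPred_eq, Set.mem_singleton_iff]
    constructor
    · rintro ⟨w, hw, rfl⟩; exact rayleigh w hw
    · rintro rfl; exact ⟨_, hv, (rayleigh _ hv).symm⟩
  rw [maxEig, rayleigh_set, csSup_singleton]

end MaxEig

section AmplitudeDamping

variable {l : ℝ}

lemma ofReal_sqrt_one_sub_mul_self (hl : l ≤ 1) : (√(1 - l) : ℂ) * √(1 - l) = 1 - l := by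
  rw [← Complex.ofReal_mul, Real.mul_self_sqrt (by linarith)]
  push_cast
  ring

lemma adChoi_eq_add_rankOne (hl : l ≤ 1) :
    adChoi l =
      (1 / 2 : ℝ) • vecMulVec (Function.uncurry !![1, 0; 0, (√(1 - l) : ℂ)])
        (star (Function.uncurry !![1, 0; 0, (√(1 - l) : ℂ)])) +
      (l / 2) • vecMulVec (Function.uncurry !![0, 0; 1, 0])
        (star (Function.uncurry !![0, 0; 1, 0])) := by
  ext ⟨i, k⟩ ⟨j, m⟩
  fin_cases i <;> fin_cases k <;> fin_cases j <;> fin_cases m <;>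
    simp [adChoi, idx4, vecMulVec, Function.uncurry, ofReal_sqrt_one_sub_mul_self hl] <;> ring

lemma adChoi_posSemidef (hl : l ∈ Set.Icc (0 : ℝ) 1) : (adChoi l).PosSemidef := by
  rw [adChoi_eq_add_rankOne hl.2]
  exact ((posSemidef_vecMulVec_self_star _).smul (by norm_num)).add
    ((posSemidef_vecMulVec_self_star _).smul (by linarith [hl.1]))

def dampingWitness (l : ℝ) : Matrix (Fin 2 × Fin 2) (Fin 2 × Fin 2) ℂ :=
  adChoi l + ((1 - l) / 2) • vecMulVec (Function.uncurry !![0, 1; 1, 0])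
    (star (Function.uncurry !![0, 1; 1, 0]))

lemma ptransposeB_dampingWitness (hl : l ≤ 1) :
    ptransposeB (dampingWitness l) =
      (1 / 2 : ℝ) • vecMulVec (Function.uncurry !![0, (√(1 - l) : ℂ); 1, 0])
        (star (Function.uncurry !![0, (√(1 - l) : ℂ); 1, 0])) +
      ((1 - l) / 2) • vecMulVec (Function.uncurry !![1, 0; 0, 1])
        (star (Function.uncurry !![1, 0; 0, 1])) +
      (l / 2) • vecMulVec (Function.uncurry !![1, 0; 0, 0])
        (star (Function.uncurry !![1, 0; 0, 0])) := by
  ext ⟨i, k⟩ ⟨j, m⟩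
  fin_cases i <;> fin_cases k <;> fin_cases j <;> fin_cases m <;>
    simp [ptransposeB, dampingWitness, adChoi, idx4, vecMulVec, Function.uncurry,
      ofReal_sqrt_one_sub_mul_self hl] <;> ring

lemma ptraceB_dampingWitness :
    ptraceB (dampingWitness l) = (1 - l / 2) • (1 : Matrix (Fin 2) (Fin 2) ℂ) := by
  ext i j
  fin_cases i <;> fin_cases j <;>
    simp [ptraceB, dampingWitness, adChoi, idx4, vecMulVec, Function.uncurry] <;> ring

lemma dampingWitness_posSemidef (hl : l ∈ Set.Icc (0 : ℝ) 1) :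
    (dampingWitness l).PosSemidef :=
  (adChoi_posSemidef hl).add ((posSemidef_vecMulVec_self_star _).smul (by linarith [hl.2]))

lemma ptransposeB_dampingWitness_posSemidef (hl : l ∈ Set.Icc (0 : ℝ) 1) :
    (ptransposeB (dampingWitness l)).PosSemidef := by
  rw [ptransposeB_dampingWitness hl.2]
  exact (((posSemidef_vecMulVec_self_star _).smul (by norm_num)).add
    ((posSemidef_vecMulVec_self_star _).smul (by linarith [hl.2]))).add
    ((posSemidef_vecMulVec_self_star _).smul (by linarith [hl.1]))

lemma dampingWitness_sub_adChoi_posSemidef (hl : l ≤ 1) :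
    (dampingWitness l - adChoi l).PosSemidef := by
  rw [dampingWitness, add_sub_cancel_left]
  exact (posSemidef_vecMulVec_self_star _).smul (by linarith)

lemma ptraceB_dual_certificate (hl : l ≤ 1) (Y : Matrix (Fin 2 × Fin 2) (Fin 2 × Fin 2) ℂ) :
    ptraceB Y 0 0 + ((1 - l : ℝ) : ℂ) * ptraceB Y 1 1 =
      star (Function.uncurry !![1, 0; 0, (√(1 - l) : ℂ)]) ⬝ᵥ
          (Y - adChoi l) *ᵥ Function.uncurry !![1, 0; 0, (√(1 - l) : ℂ)] +
        star (Function.uncurry !![0, 1; -(√(1 - l) : ℂ), 0]) ⬝ᵥ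
          ptransposeB Y *ᵥ Function.uncurry !![0, 1; -(√(1 - l) : ℂ), 0] +
        ((2 - l) ^ 2 / 2 : ℝ) := by
  simp only [ptraceB, Fin.sum_univ_two, Fin.isValue, of_apply, Complex.ofReal_sub,
    Complex.ofReal_one, dotProduct, Pi.star_apply, Function.uncurry, cons_val', cons_val_fin_one,
    RCLike.star_def, mulVec, adChoi, one_div, idx4, Matrix.sub_apply, Fintype.sum_prod_type,
    Fin.coe_ofNat_eq_mod, Nat.zero_mod, add_zero, cons_val_zero, Nat.mod_succ, cons_val_succ',
    cons_val_one, mul_zero, Fin.zero_eta, mul_one, Fin.reduceFinMk, cons_val, zero_add, map_one,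
    one_mul, map_zero, sub_zero, zero_mul, Complex.conj_ofReal, ptransposeB, mul_neg, map_neg,
    neg_mul, Complex.ofReal_div, Complex.ofReal_pow, Complex.ofReal_ofNat]
  linear_combination (norm := ring_nf) ((3 - (l : ℂ)) / 2 - Y (1, 0) (1, 0) - Y (1, 1) (1, 1)) *
    ofReal_sqrt_one_sub_mul_self hl

lemma one_sub_half_le_maxEig_ptraceB (hl : l ≤ 1) {Y : Matrix (Fin 2 × Fin 2) (Fin 2 × Fin 2) ℂ}
    (hPT : (ptransposeB Y).PosSemidef) (hYπ : (Y - adChoi l).PosSemidef) :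
    1 - l / 2 ≤ maxEig (ptraceB Y) := by
  have certificate := congrArg Complex.re (ptraceB_dual_certificate hl Y)
  simp only [Complex.add_re, Complex.re_ofReal_mul, Complex.ofReal_re] at certificate
  have hz := hYπ.re_dotProduct_nonneg (Function.uncurry !![1, 0; 0, (√(1 - l) : ℂ)])
  have hw := hPT.re_dotProduct_nonneg (Function.uncurry !![0, 1; -(√(1 - l) : ℂ), 0])
  have h0 := re_apply_le_maxEig (ptraceB Y) 0
  have h1 := mul_le_mul_of_nonneg_left (re_apply_le_maxEig (ptraceB Y) 1)
    (by linarith : 0 ≤ 1 - l)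
  rw [RCLike.re_to_complex] at hz hw
  nlinarith

end AmplitudeDamping

/-- The SDP value: the infimum of the operator norm of `Tr_B Y` over all
PSD, PPT matrices `Y` with `Y ⪰ π_λ` equals `1 − λ/2`. -/
theorem stmt9 (l : ℝ) (hl : l ∈ Set.Icc (0:ℝ) 1) :
    sInf {r : ℝ | ∃ Y : Matrix (Fin 2 × Fin 2) (Fin 2 × Fin 2) ℂ,
        Y.IsHermitian ∧ Y.PosSemidef ∧ (ptransposeB Y).PosSemidef ∧
        (Y - adChoi l).PosSemidef ∧ r = maxEig (ptraceB Y)}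
      = 1 - l / 2 := by
  refine IsLeast.csInf_eq ⟨⟨dampingWitness l, (dampingWitness_posSemidef hl).isHermitian,
    dampingWitness_posSemidef hl, ptransposeB_dampingWitness_posSemidef hl,
    dampingWitness_sub_adChoi_posSemidef hl.2, ?_⟩, ?_⟩
  · rw [ptraceB_dampingWitness, maxEig_smul_one]
  · rintro r ⟨Y, -, -, hPT, hYπ, rfl⟩
    exact one_sub_half_le_maxEig_ptraceB hl.2 hPT hYπ
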